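/- Consider the bilinear system z_{k+1} = A z_k + B u_k + H (z_k ⊗ u_k) and a T-long data trajectory (u^d, z^d) with v^d_k = z^d_k ⊗ u^d_k. If the matrix 𝒢_L(T) obtained by vertically stacking Z_{1,1,T−L+1} (row of initial states), U_{1,L,T−L+1}, and V_{1,L,T−L+1} has full row rank, then for every length-L trajectory (u, z) of the bilinear system there exists g ∈ ℝ^{T−L+1} with z_{[1,L+1]} = Z_{1,L+1,T−L+1} g and u_{[1,L]} = U_{1,L,T−L+1} g. -/
import Mathlib


open Matrix

/-- Kronecker product of two vectors. -/
def kron {n m : ℕ} (z : Fin n → ℝ) (u : Fin m → ℝ) : Fin n × Fin m → ℝ :=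
  fun p => z p.1 * u p.2

/-- Depth-`L` Hankel matrix with `C` columns of a `T`-long vector-valued signal. -/
def hankel {α : Type} {T : ℕ} (L C : ℕ) (h : L + C ≤ T + 1) (w : Fin T → α → ℝ) :
    Matrix (Fin L × α) (Fin C) ℝ :=
  fun p j => w ⟨p.1.val + j.val, by have := p.1.isLt; have := j.isLt; omega⟩ p.2

lemma mulVec_sum_helper {ι κ σ : Type*} [Fintype ι] [Fintype κ]
    (M : Matrix σ κ ℝ) (w : ι → κ → ℝ) (g : ι → ℝ) (a : σ) :
    ∑ j, (M *ᵥ w j) a * g j = (M *ᵥ fun b => ∑ j, w j b * g j) a := by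
  simp only [Matrix.mulVec, dotProduct, Finset.sum_mul, Finset.mul_sum]
  rw [Finset.sum_comm]
  simp [mul_assoc]

/-- bilinear Fundamental Lemma, direction (i): if the stacked matrix
`𝒢_L(T) = [Z_{1,1,T-L+1}; U_{1,L,T-L+1}; V_{1,L,T-L+1}]` built from data of the
bilinear system has full row rank, then every length-`L` trajectory of the
bilinear system is a linear combination of the data Hankel matrices' columns. -/
theorem bilinear_fundamental_lemma_i {n m L T : ℕ} (hL : 1 ≤ L) (hLT : L ≤ T)
    (A : Matrix (Fin n) (Fin n) ℝ) (B : Matrix (Fin n) (Fin m) ℝ)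
    (H : Matrix (Fin n) (Fin n × Fin m) ℝ)
    (ud : Fin T → Fin m → ℝ) (zd : Fin (T + 1) → Fin n → ℝ)
    (hdata : ∀ k : Fin T, zd k.succ =
      A *ᵥ zd k.castSucc + B *ᵥ ud k + H *ᵥ kron (zd k.castSucc) (ud k))
    (hrank : Matrix.rank (Matrix.of
        fun (r : Fin n ⊕ ((Fin L × Fin m) ⊕ (Fin L × (Fin n × Fin m))))
            (j : Fin (T - L + 1)) =>
          Sum.elim
            (fun a : Fin n => zd ⟨j.val, by have := j.isLt; omega⟩ a)
            (Sum.elim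
              (fun p : Fin L × Fin m => hankel L (T - L + 1) (by omega) ud p j)
              (fun p : Fin L × (Fin n × Fin m) =>
                hankel L (T - L + 1) (by omega)
                  (fun k : Fin T => kron (zd k.castSucc) (ud k)) p j)) r)
      = n + m * L + n * m * L)
    (u : Fin L → Fin m → ℝ) (z : Fin (L + 1) → Fin n → ℝ)
    (htraj : ∀ i : Fin L, z i.succ =
      A *ᵥ z i.castSucc + B *ᵥ u i + H *ᵥ kron (z i.castSucc) (u i)) :
    ∃ g : Fin (T - L + 1) → ℝ,
      (∀ p : Fin (L + 1) × Fin n,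
        z p.1 p.2 = (hankel (L + 1) (T - L + 1) (by omega) zd *ᵥ g) p) ∧
      (∀ p : Fin L × Fin m,
        u p.1 p.2 = (hankel L (T - L + 1) (by omega) ud *ᵥ g) p) := by
  set G := Matrix.of
        fun (r : Fin n ⊕ ((Fin L × Fin m) ⊕ (Fin L × (Fin n × Fin m))))
            (j : Fin (T - L + 1)) =>
          Sum.elim
            (fun a : Fin n => zd ⟨j.val, by have := j.isLt; omega⟩ a)
            (Sum.elim
              (fun p : Fin L × Fin m => hankel L (T - L + 1) (by omega) ud p j)
              (fun p : Fin L × (Fin n × Fin m) =>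
                hankel L (T - L + 1) (by omega)
                  (fun k : Fin T => kron (zd k.castSucc) (ud k)) p j)) r
    with hGdef
  -- target vector
  set b : Fin n ⊕ ((Fin L × Fin m) ⊕ (Fin L × (Fin n × Fin m))) → ℝ :=
    Sum.elim (fun a => z 0 a)
      (Sum.elim (fun p => u p.1 p.2)
        (fun p => kron (z p.1.castSucc) (u p.1) p.2)) with hbdef
  obtain ⟨g, hg⟩ : ∃ g, G *ᵥ g = b := by
    have h1 : LinearMap.range G.mulVecLin = ⊤ := by
      apply Submodule.eq_top_of_finrank_eq
      rw [show Module.finrank ℝ ↥(LinearMap.range G.mulVecLin) = G.rank from rfl]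
      rw [hrank]
      simp [Module.finrank_fintype_fun_eq_card]
      ring
    exact (LinearMap.range_eq_top).mp h1 b
  -- component equations from hg
  have hz0 : ∀ a : Fin n,
      ∑ j : Fin (T - L + 1), zd ⟨j.val, by have := j.isLt; omega⟩ a * g j = z 0 a := by
    intro a
    have := congrFun hg (Sum.inl a)
    simpa [Matrix.mulVec, dotProduct, hGdef, hbdef] using this
  have hu : ∀ p : Fin L × Fin m,
      ∑ j : Fin (T - L + 1),
        ud ⟨p.1.val + j.val, by have := p.1.isLt; have := j.isLt; omega⟩ p.2 * g j
        = u p.1 p.2 := by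
    intro p
    have := congrFun hg (Sum.inr (Sum.inl p))
    simpa [Matrix.mulVec, dotProduct, hGdef, hbdef, hankel] using this
  have hv : ∀ p : Fin L × (Fin n × Fin m),
      ∑ j : Fin (T - L + 1),
        kron (zd (⟨p.1.val + j.val, by have := p.1.isLt; have := j.isLt; omega⟩ :
            Fin T).castSucc)
          (ud ⟨p.1.val + j.val, by have := p.1.isLt; have := j.isLt; omega⟩) p.2 * g j
        = kron (z p.1.castSucc) (u p.1) p.2 := by
    intro p
    have := congrFun hg (Sum.inr (Sum.inr p))
    simpa [Matrix.mulVec, dotProduct, hGdef, hbdef, hankel] using this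
  -- the main induction
  have key : ∀ i : Fin (L + 1), ∀ a : Fin n,
      z i a = ∑ j : Fin (T - L + 1),
        zd ⟨i.val + j.val, by have := i.isLt; have := j.isLt; omega⟩ a * g j := by
    intro i
    induction i using Fin.induction with
    | zero => intro a; simpa using (hz0 a).symm
    | succ i ih =>
      intro a
      have hstep : ∀ j : Fin (T - L + 1),
          zd ⟨(i.succ).val + j.val, by have := i.isLt; have := j.isLt; omega⟩ a
          = (A *ᵥ zd (⟨i.val + j.val, by have := i.isLt; have := j.isLt; omega⟩ :
                Fin T).castSucc
            + B *ᵥ ud ⟨i.val + j.val, by have := i.isLt; have := j.isLt; omega⟩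
            + H *ᵥ kron
                (zd (⟨i.val + j.val, by have := i.isLt; have := j.isLt; omega⟩ :
                  Fin T).castSucc)
                (ud ⟨i.val + j.val, by have := i.isLt; have := j.isLt; omega⟩)) a := by
        intro j
        have hk : (⟨(i.succ).val + j.val, by have := i.isLt; have := j.isLt; omega⟩ :
            Fin (T + 1))
            = (⟨i.val + j.val, by have := i.isLt; have := j.isLt; omega⟩ : Fin T).succ := by
          apply Fin.ext
          simp [Fin.succ]
          omega
        rw [hk, hdata]
      rw [Finset.sum_congr rfl fun j _ => by rw [hstep j]]
      simp only [Pi.add_apply, add_mul, Finset.sum_add_distrib]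
      rw [mulVec_sum_helper A, mulVec_sum_helper B, mulVec_sum_helper H]
      have hA : (fun b => ∑ j : Fin (T - L + 1),
          zd (⟨i.val + j.val, by have := i.isLt; have := j.isLt; omega⟩ :
            Fin T).castSucc b * g j) = z i.castSucc := by
        funext c
        rw [ih c]
        exact Finset.sum_congr rfl fun j _ => by congr 1
      have hB : (fun c => ∑ j : Fin (T - L + 1),
          ud ⟨i.val + j.val, by have := i.isLt; have := j.isLt; omega⟩ c * g j)
          = u i := by
        funext c
        exact hu (i, c)
      have hH : (fun q => ∑ j : Fin (T - L + 1),
          kron (zd (⟨i.val + j.val, by have := i.isLt; have := j.isLt; omega⟩ :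
              Fin T).castSucc)
            (ud ⟨i.val + j.val, by have := i.isLt; have := j.isLt; omega⟩) q * g j)
          = kron (z i.castSucc) (u i) := by
        funext q
        exact hv (i, q)
      rw [hA, hB, hH, htraj i]
      simp [Pi.add_apply]
  refine ⟨g, ?_, ?_⟩
  · rintro ⟨i, a⟩
    simpa [hankel, Matrix.mulVec, dotProduct] using key i a
  · rintro ⟨i, c⟩
    simpa [hankel, Matrix.mulVec, dotProduct] using (hu (i, c)).symm
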